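/- arXiv:2202.11520 — 2 statements merged into one kernel-verified Lean document; each statement's English description precedes it below -/
import Mathlib

section
/- Let A be a normal n×n complex matrix and q ≥ 0. Then for all B ∈ M_n(ℂ), ‖AB − qBA‖_F² ≤ (1 + q²)‖A‖_F²‖B‖_F². -/
open Matrix
open scoped BigOperators Matrix

noncomputable def frobSq {n : ℕ} (M : Matrix (Fin n) (Fin n) ℂ) : ℝ :=
  ∑ i, ∑ j, ‖M i j‖ ^ 2

/-!
Diagonalize the normal matrix `A` unitarily: `A = U D U*` with `D = diagonal d`. Conjugation by
`U` preserves the Frobenius norm, so with `C = U* B U` the claim becomes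
`‖D C - q C D‖² ≤ (1 + q²) ‖D‖² ‖C‖²`. Entrywise `(D C - q C D) i j = (d i - q d j) C i j`, and
`|d i - q d j|² ≤ (1 + q²) ∑ k, |d k|²`: for `i ≠ j` by Cauchy–Schwarz, and for `i = j` because
`(1 - q)² ≤ 1 + q²` when `q ≥ 0`.
-/

open ComplexStarModule Unitary

theorem DirectSum.IsInternal.exists_orthonormalBasis_subordinate
    {𝕜 E ι : Type*} [RCLike 𝕜] [NormedAddCommGroup E] [InnerProductSpace 𝕜 E]
    [FiniteDimensional 𝕜 E] [DecidableEq ι] {n : ℕ} (hn : Module.finrank 𝕜 E = n)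
    {V : ι → Submodule 𝕜 E} (hV : IsInternal V)
    (hV' : OrthogonalFamily 𝕜 (fun i ↦ V i) fun i ↦ (V i).subtypeₗᵢ) :
    ∃ b : OrthonormalBasis (Fin n) 𝕜 E, ∀ a, ∃ i, b a ∈ V i := by
  -- `subordinateOrthonormalBasis` needs a finite index type: keep the nonzero summands only
  let := hV.submodule_iSupIndep.fintypeNeBotOfFiniteDimensional
  have hV₀ := isInternal_ne_bot_iff.mpr hV
  have hV₀' := hV'.comp (f := Subtype.val (p := fun i ↦ V i ≠ ⊥)) Subtype.val_injective
  exact ⟨hV₀.subordinateOrthonormalBasis hn hV₀',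
    fun a ↦ ⟨_, hV₀.subordinateOrthonormalBasis_subordinate hn a hV₀'⟩⟩

/-- A joint eigenbasis of the commuting self-adjoint operators `ℜ T` and `ℑ T` diagonalizes
`T = ℜ T + I • ℑ T`. -/
theorem ContinuousLinearMap.exists_orthonormalBasis_apply_eq_smul_of_isStarNormal
    {E : Type*} [NormedAddCommGroup E] [InnerProductSpace ℂ E] [FiniteDimensional ℂ E]
    {n : ℕ} (hn : Module.finrank ℂ E = n) (T : E →L[ℂ] E) [IsStarNormal T] :
    ∃ (b : OrthonormalBasis (Fin n) ℂ E) (d : Fin n → ℂ), ∀ a, T (b a) = d a • b a := by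
  set S₁ : E →ₗ[ℂ] E := ((ℜ T : E →L[ℂ] E) : E →ₗ[ℂ] E)
  set S₂ : E →ₗ[ℂ] E := ((ℑ T : E →L[ℂ] E) : E →ₗ[ℂ] E)
  have hS₁ : S₁.IsSymmetric := (ℜ T).2.isSymmetric
  have hS₂ : S₂.IsSymmetric := (ℑ T).2.isSymmetric
  have hC : Commute S₁ S₂ := (Commute.realPart_imaginaryPart T).map toLinearMapRingHom
  obtain ⟨b, hb⟩ := DirectSum.IsInternal.exists_orthonormalBasis_subordinate hn
    (hS₁.directSum_isInternal_of_commute hS₂ hC)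
    (hS₁.orthogonalFamily_eigenspace_inf_eigenspace hS₂)
  choose μ hμ using hb
  refine ⟨b, fun a ↦ (μ a).2 + Complex.I * (μ a).1, fun a ↦ ?_⟩
  have h₁ : S₁ (b a) = (μ a).2 • b a := Module.End.mem_eigenspace_iff.mp (hμ a).1
  have h₂ : S₂ (b a) = (μ a).1 • b a := Module.End.mem_eigenspace_iff.mp (hμ a).2
  calc T (b a) = S₁ (b a) + Complex.I • S₂ (b a) := by
        conv_lhs => rw [← realPart_add_I_smul_imaginaryPart T]
        rfl
    _ = _ := by rw [h₁, h₂, smul_smul, ← add_smul]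

namespace Matrix

variable {m : Type*} [Fintype m] [DecidableEq m]

theorem exists_eq_conjStarAlgAut_diagonal_of_isStarNormal (A : Matrix m m ℂ) [IsStarNormal A] :
    ∃ (U : unitaryGroup m ℂ) (d : m → ℂ), A = conjStarAlgAut ℂ _ U (diagonal d) := by
  have : IsStarNormal (toEuclideanCLM (n := m) (𝕜 := ℂ) A) := ‹IsStarNormal A›.map _
  obtain ⟨b, d, hb⟩ := ContinuousLinearMap.exists_orthonormalBasis_apply_eq_smul_of_isStarNormal
    (finrank_euclideanSpace (𝕜 := ℂ) (ι := m)) (toEuclideanCLM (n := m) (𝕜 := ℂ) A)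
  set e := Fintype.equivFin m
  set U := (EuclideanSpace.basisFun m ℂ).toBasis.toMatrix (b.reindex e.symm).toBasis
  have hU : U ∈ unitaryGroup m ℂ :=
    (EuclideanSpace.basisFun m ℂ).toMatrix_orthonormalBasis_mem_unitary (b.reindex e.symm)
  have hU_apply (i j : m) : U i j = b (e j) i := by simp [U, Module.Basis.toMatrix_apply]
  have hAU : A * U = U * diagonal (d ∘ e) := by
    ext i j
    rw [mul_diagonal, mul_apply]
    simpa [hU_apply, toEuclideanCLM_toLp, mulVec, dotProduct, mul_comm] using congr($(hb (e j)) i)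
  refine ⟨⟨U, hU⟩, d ∘ e, ?_⟩
  rw [conjStarAlgAut_apply, ← hAU, mul_assoc, mul_star_self_of_mem hU, mul_one]

theorem trace_conjStarAlgAut {R : Type*} [CommRing R] [StarRing R]
    (U : unitaryGroup m R) (M : Matrix m m R) :
    trace (conjStarAlgAut R _ U M) = trace M := by
  rw [conjStarAlgAut_apply, trace_mul_cycle, coe_star_mul_self, one_mul]

end Matrix

theorem norm_sub_smul_sq_le {E : Type*} [SeminormedAddCommGroup E] [NormedSpace ℝ E]
    (q : ℝ) (x y : E) : ‖x - q • y‖ ^ 2 ≤ (1 + q ^ 2) * (‖x‖ ^ 2 + ‖y‖ ^ 2) := by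
  have h : ‖x - q • y‖ ≤ ‖x‖ + |q| * ‖y‖ := by
    simpa [norm_smul] using norm_sub_le x (q • y)
  nlinarith [norm_nonneg (x - q • y), sq_abs q, sq_nonneg (|q| * ‖x‖ - ‖y‖)]

theorem norm_sub_smul_self_sq_le {E : Type*} [SeminormedAddCommGroup E] [NormedSpace ℝ E]
    {q : ℝ} (hq : 0 ≤ q) (x : E) : ‖x - q • x‖ ^ 2 ≤ (1 + q ^ 2) * ‖x‖ ^ 2 := by
  rw [show x - q • x = (1 - q) • x by rw [sub_smul, one_smul], norm_smul, mul_pow,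
    Real.norm_eq_abs, sq_abs]
  gcongr
  nlinarith

theorem norm_sub_smul_sq_le_sum {E ι : Type*} [SeminormedAddCommGroup E] [NormedSpace ℝ E]
    [Fintype ι] {q : ℝ} (hq : 0 ≤ q) (x : ι → E) (i j : ι) :
    ‖x i - q • x j‖ ^ 2 ≤ (1 + q ^ 2) * ∑ k, ‖x k‖ ^ 2 := by
  classical
  obtain rfl | hij := eq_or_ne i j
  · exact (norm_sub_smul_self_sq_le hq (x i)).trans <| by
      gcongr
      exact Finset.single_le_sum (f := fun k ↦ ‖x k‖ ^ 2) (fun _ _ ↦ by positivity)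
        (Finset.mem_univ i)
  · refine (norm_sub_smul_sq_le q (x i) (x j)).trans ?_
    gcongr
    rw [← Finset.sum_pair (f := fun k ↦ ‖x k‖ ^ 2) hij]
    exact Finset.sum_le_sum_of_subset_of_nonneg (Finset.subset_univ _)
      (fun _ _ _ ↦ by positivity)

section frobSq

variable {n : ℕ}

theorem ofReal_frobSq (M : Matrix (Fin n) (Fin n) ℂ) : (frobSq M : ℂ) = trace (Mᴴ * M) := by
  simp only [frobSq, trace, diag, mul_apply, conjTranspose_apply, RCLike.star_def,
    RCLike.conj_mul]
  push_cast
  exact Finset.sum_comm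

theorem frobSq_conjStarAlgAut (U : unitaryGroup (Fin n) ℂ) (M : Matrix (Fin n) (Fin n) ℂ) :
    frobSq (conjStarAlgAut ℂ _ U M) = frobSq M := by
  apply Complex.ofReal_injective
  rw [ofReal_frobSq, ofReal_frobSq, ← star_eq_conjTranspose, ← map_star, ← map_mul,
    trace_conjStarAlgAut, star_eq_conjTranspose]

theorem frobSq_diagonal (d : Fin n → ℂ) : frobSq (diagonal d) = ∑ i, ‖d i‖ ^ 2 := by
  refine Finset.sum_congr rfl fun i _ ↦ ?_
  rw [Finset.sum_eq_single i (fun j _ hji ↦ by simp [diagonal_apply_ne' d hji]) (by simp),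
    diagonal_apply_eq]

theorem frobSq_diagonal_mul_sub_smul_mul_diagonal_le {q : ℝ} (hq : 0 ≤ q) (d : Fin n → ℂ)
    (C : Matrix (Fin n) (Fin n) ℂ) :
    frobSq (diagonal d * C - (q : ℂ) • (C * diagonal d))
      ≤ (1 + q ^ 2) * frobSq (diagonal d) * frobSq C := by
  have h_apply (i j : Fin n) : (diagonal d * C - (q : ℂ) • (C * diagonal d)) i j
      = (d i - q • d j) * C i j := by
    simp only [Matrix.sub_apply, Matrix.smul_apply, diagonal_mul, mul_diagonal, Complex.real_smul,
      smul_eq_mul]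
    ring
  calc frobSq (diagonal d * C - (q : ℂ) • (C * diagonal d))
      = ∑ i, ∑ j, ‖d i - q • d j‖ ^ 2 * ‖C i j‖ ^ 2 := by
        simp only [frobSq, h_apply, norm_mul, mul_pow]
    _ ≤ ∑ i, ∑ j, ((1 + q ^ 2) * ∑ k, ‖d k‖ ^ 2) * ‖C i j‖ ^ 2 := by
        gcongr with i _ j _
        exact norm_sub_smul_sq_le_sum hq d i j
    _ = (1 + q ^ 2) * frobSq (diagonal d) * frobSq C := by
        rw [frobSq_diagonal, frobSq]
        simp only [← Finset.mul_sum]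

end frobSq

theorem stmt_3 {n : ℕ} (q : ℝ) (hq : 0 ≤ q)
    (A : Matrix (Fin n) (Fin n) ℂ) (hA : A * Aᴴ = Aᴴ * A)
    (B : Matrix (Fin n) (Fin n) ℂ) :
    frobSq (A * B - (q : ℂ) • (B * A)) ≤ (1 + q ^ 2) * frobSq A * frobSq B := by
  have : IsStarNormal A := ⟨hA.symm⟩
  obtain ⟨U, d, rfl⟩ := exists_eq_conjStarAlgAut_diagonal_of_isStarNormal A
  set φ := conjStarAlgAut ℂ _ U
  obtain ⟨C, rfl⟩ := EquivLike.surjective φ B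
  rw [← map_mul, ← map_mul, ← map_smul, ← map_sub, frobSq_conjStarAlgAut, frobSq_conjStarAlgAut,
    frobSq_conjStarAlgAut]
  exact frobSq_diagonal_mul_sub_smul_mul_diagonal_le hq d C
end

section
/- For n ≥ 4 there exists q < 0 such that g(n)(1−q)² > 1 + q², where g(n) = (n² − 3n + 3)/(n(n−1)); hence there exist traceless A ∈ M_n(ℂ) and B ∈ M_n(ℂ) with ‖AB − qBA‖_F² > (1+q²)‖A‖_F²‖B‖_F². In contrast, for n ∈ {2,3}, g(n) = 1/2 and (1−q)²/2 ≤ 1 + q² for all q ≤ 0. -/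
open Matrix
open scoped BigOperators Matrix

noncomputable def g (n : ℕ) : ℝ :=
  ((n : ℝ) ^ 2 - 3 * n + 3) / ((n : ℝ) * (n - 1))

/-!
Everything rests on 2(n² - 3n + 3) - n(n - 1) = (n - 2)(n - 3): it vanishes for n ∈ {2, 3}
and is positive for n ≥ 4, so there g(n) > 1/2 and already q = -1 works. For the matrices take
A = B = D = diag(n-1, -1, …, -1): then ‖D‖_F² = n(n-1) and
‖D²‖_F² = (n-1)⁴ + (n-1) = (n-1)·n·(n² - 3n + 3) = g(n)‖D‖_F⁴, so
‖AB + BA‖_F² = 4g(n)‖D‖_F⁴ > 2‖D‖_F⁴.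
-/

theorem Fintype.sum_ite_eq_add_mul {ι R : Type*} [Fintype ι] [DecidableEq ι] [CommRing R]
    (a : ι) (x y : R) :
    ∑ i, (if i = a then x else y) = x + (Fintype.card ι - 1 : R) * y := by
  have split : ∀ i, (if i = a then x else y) = (if i = a then x - y else 0) + y := by
    intro i; split_ifs <;> ring
  simp only [split, Finset.sum_add_distrib, Finset.sum_ite_eq', Finset.mem_univ, if_true,
    Finset.sum_const, Finset.card_univ, nsmul_eq_mul]
  ring

theorem frobSq_smul {n : ℕ} (c : ℂ) (M : Matrix (Fin n) (Fin n) ℂ) :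
    frobSq (c • M) = ‖c‖ ^ 2 * frobSq M := by
  simp only [frobSq, Matrix.smul_apply, smul_eq_mul, norm_mul, mul_pow, Finset.mul_sum]

theorem frobSq_diagonal_ofReal {n : ℕ} (e : Fin n → ℝ) :
    frobSq (diagonal fun i => (e i : ℂ)) = ∑ i, e i ^ 2 := by
  simp only [frobSq, diagonal_apply]
  refine Finset.sum_congr rfl fun i _ => ?_
  rw [Finset.sum_eq_single i (fun j _ hji => by simp [Ne.symm hji]) (by simp)]
  simp [Complex.norm_real, sq_abs]

theorem one_half_lt_g {n : ℕ} (hn : 4 ≤ n) : 1 / 2 < g n := by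
  have hN : (4 : ℝ) ≤ n := by exact_mod_cast hn
  rw [g, lt_div_iff₀ (by nlinarith)]
  nlinarith

theorem sq_one_sub_div_two_le (q : ℝ) : (1 - q) ^ 2 / 2 ≤ 1 + q ^ 2 := by
  nlinarith [sq_nonneg (1 + q)]

section Spike

variable (n : ℕ) [NeZero n]

def spike (i : Fin n) : ℝ :=
  if i = 0 then n - 1 else -1

noncomputable def spikeMatrix : Matrix (Fin n) (Fin n) ℂ :=
  diagonal fun i => (spike n i : ℂ)

theorem trace_spikeMatrix : (spikeMatrix n).trace = 0 := by
  simp only [spikeMatrix, trace_diagonal, spike, apply_ite Complex.ofReal,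
    Fintype.sum_ite_eq_add_mul, Fintype.card_fin]
  push_cast
  ring

theorem frobSq_spikeMatrix : frobSq (spikeMatrix n) = n * (n - 1) := by
  simp only [spikeMatrix, frobSq_diagonal_ofReal, spike, apply_ite (· ^ 2 : ℝ → ℝ),
    Fintype.sum_ite_eq_add_mul, Fintype.card_fin]
  ring

theorem frobSq_spikeMatrix_mul_self (hn : 2 ≤ n) :
    frobSq (spikeMatrix n * spikeMatrix n) = g n * frobSq (spikeMatrix n) ^ 2 := by
  have hN : (2 : ℝ) ≤ n := by exact_mod_cast hn
  have hsq : spikeMatrix n * spikeMatrix n = diagonal fun i => ((spike n i ^ 2 : ℝ) : ℂ) := by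
    simp only [spikeMatrix, diagonal_mul_diagonal]
    push_cast
    ring_nf
  rw [hsq, frobSq_diagonal_ofReal, frobSq_spikeMatrix, g]
  simp only [spike, apply_ite (· ^ 2 : ℝ → ℝ), Fintype.sum_ite_eq_add_mul, Fintype.card_fin]
  field_simp
  ring

end Spike

theorem stmt_19 {n : ℕ} (hn : 4 ≤ n) :
    (∃ q : ℝ, q < 0 ∧ g n * (1 - q) ^ 2 > 1 + q ^ 2 ∧
      ∃ A B : Matrix (Fin n) (Fin n) ℂ, A.trace = 0 ∧ B.trace = 0 ∧
        frobSq (A * B - (q : ℂ) • (B * A)) > (1 + q ^ 2) * frobSq A * frobSq B) ∧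
    g 2 = 1 / 2 ∧ g 3 = 1 / 2 ∧
    ∀ q : ℝ, q ≤ 0 → (1 - q) ^ 2 / 2 ≤ 1 + q ^ 2 := by
  have : NeZero n := ⟨by omega⟩
  have hg := one_half_lt_g hn
  set D := spikeMatrix n
  have hD : 0 < frobSq D := by
    have hN : (4 : ℝ) ≤ n := by exact_mod_cast hn
    rw [frobSq_spikeMatrix]; nlinarith
  have hanti : D * D - ((-1 : ℝ) : ℂ) • (D * D) = (2 : ℂ) • (D * D) := by
    push_cast; rw [neg_one_smul, sub_neg_eq_add, two_smul]
  refine ⟨⟨-1, by norm_num, by linarith, D, D, trace_spikeMatrix n, trace_spikeMatrix n, ?_⟩,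
    by norm_num [g], by norm_num [g], fun q _ => sq_one_sub_div_two_le q⟩
  rw [hanti, frobSq_smul, frobSq_spikeMatrix_mul_self n (by omega)]
  norm_num
  nlinarith [mul_pos hD hD]
end
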